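/- Let G₁ and G₂ be finite groups with a common subgroup G₃, let Γ = G₁ *_{G₃} G₂ be their amalgamated free product, and let φ : Γ → H be a homomorphism to a group H. Then the kernel of φ is torsion-free if and only if the restrictions of φ to G₁ and to G₂ are both injective. -/

import Mathlib

universe u

/-- The two-element family of groups used to form the amalgam `G₁ *_{G₃} G₂`
as an indexed pushout over `Bool`. -/
def AmalgamFam (G₁ G₂ : Type u) : Bool → Type u
  | false => G₁
  | true => G₂

instance (G₁ G₂ : Type u) [Group G₁] [Group G₂] : ∀ b, Group (AmalgamFam G₁ G₂ b)
  | false => ‹Group G₁›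
  | true => ‹Group G₂›

/-- Old Mathlib definition (removed since): no nontrivial element has finite order. -/
def Monoid.IsTorsionFree (G : Type*) [Monoid G] : Prop :=
  ∀ g : G, g ≠ 1 → ¬IsOfFinOrder g

/-- The pair of inclusions `G₃ → G₁`, `G₃ → G₂` as a family indexed by `Bool`. -/
def amalgamHom {G₁ G₂ : Type u} {G₃ : Type*} [Group G₁] [Group G₂] [Group G₃]
    (f₁ : G₃ →* G₁) (f₂ : G₃ →* G₂) : ∀ b, G₃ →* AmalgamFam G₁ G₂ b
  | false => f₁
  | true => f₂

/-!
Every element of the amalgam is `base h * x₁ ⋯ xₙ` for a reduced sequence of letters `xₖ`: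
consecutive letters lie in different factors and no letter lies in the image of the base.
If `x₁` and `xₙ` lie in the same factor, conjugating by `base h * x₁` merges them and shortens the
sequence. Otherwise, after absorbing `h` into `x₁`, the sequence is cyclically reduced: its powers
are reduced and nonempty, hence nontrivial by the normal form theorem, so the element has infinite
order. Hence every element of finite order is conjugate into a factor, and such an element lies in
the kernel only if the restriction of `ψ` to that factor kills a nontrivial element. Conversely the
factors are finite, so a nontrivial element of a factor in the kernel is torsion.
-/

open Function

namespace Monoid.PushoutI

variable {ι : Type*} {G : ι → Type*} {H : Type*} [∀ i, Group (G i)] [Group H]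
  {φ : ∀ i, H →* G i}

-- Mathlib's `Reduced φ`, but on plain lists, so that letters can be edited without
-- re-proving the invariants of `CoprodI.Word`.
variable (φ) in
def IsReducedList (L : List (Σ i, G i)) : Prop :=
  (L.map Sigma.fst).IsChain (· ≠ ·) ∧ ∀ p ∈ L, p.2 ∉ (φ p.1).range

variable (φ) in
def listProd (L : List (Σ i, G i)) : PushoutI φ :=
  (L.map fun p => of p.1 p.2).prod

@[simp]
theorem listProd_nil : listProd φ [] = 1 := rfl

@[simp]
theorem listProd_cons (p : Σ i, G i) (L : List (Σ i, G i)) :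
    listProd φ (p :: L) = of p.1 p.2 * listProd φ L := rfl

@[simp]
theorem listProd_append (L M : List (Σ i, G i)) :
    listProd φ (L ++ M) = listProd φ L * listProd φ M := by
  simp [listProd]

theorem listProd_flatten_replicate (L : List (Σ i, G i)) (n : ℕ) :
    listProd φ (List.replicate n L).flatten = listProd φ L ^ n := by
  induction n with
  | zero => exact (pow_zero _).symm
  | succ n ih => rw [List.replicate_succ, List.flatten_cons, listProd_append, ih, pow_succ']

theorem ofCoprodI_word_prod (w : CoprodI.Word G) :
    ofCoprodI (φ := φ) w.prod = listProd φ w.toList := by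
  simp [CoprodI.Word.prod, listProd, map_list_prod, Function.comp_def, ofCoprodI_of]

theorem base_mul_listProd_cons (h : H) {i : ι} (x : G i) (L : List (Σ i, G i)) :
    base φ h * listProd φ (⟨i, x⟩ :: L) = listProd φ (⟨i, φ i h * x⟩ :: L) := by
  simp [← of_apply_eq_base φ i h, mul_assoc]

theorem listProd_concat_mul_base (L : List (Σ i, G i)) {i : ι} (x : G i) (h : H) :
    listProd φ (L ++ [⟨i, x⟩]) * base φ h = listProd φ (L ++ [⟨i, x * φ i h⟩]) := by
  simp [← of_apply_eq_base φ i h, mul_assoc]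

theorem isReducedList_nil : IsReducedList φ [] :=
  ⟨List.isChain_nil, fun _ h => absurd h List.not_mem_nil⟩

namespace IsReducedList

variable {L M : List (Σ i, G i)}

theorem of_map_fst_eq (hL : IsReducedList φ L) (hfst : M.map Sigma.fst = L.map Sigma.fst)
    (hM : ∀ p ∈ M, p.2 ∉ (φ p.1).range) : IsReducedList φ M :=
  ⟨hfst ▸ hL.1, hM⟩

theorem tail {p : Σ i, G i} (hL : IsReducedList φ (p :: L)) : IsReducedList φ L :=
  ⟨hL.1.tail, fun q hq => hL.2 q (List.mem_cons_of_mem p hq)⟩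

theorem append_left (hLM : IsReducedList φ (L ++ M)) : IsReducedList φ L :=
  ⟨(List.isChain_append.1 (List.map_append ▸ hLM.1)).1,
    fun p hp => hLM.2 p (List.mem_append_left M hp)⟩

theorem append (hL : IsReducedList φ L) (hM : IsReducedList φ M)
    (hjoin : ∀ a ∈ (L.map Sigma.fst).getLast?, ∀ b ∈ (M.map Sigma.fst).head?, a ≠ b) :
    IsReducedList φ (L ++ M) := by
  refine ⟨List.map_append ▸ List.isChain_append.2 ⟨hL.1, hM.1, hjoin⟩, fun p hp => ?_⟩
  rcases List.mem_append.1 hp with hp | hp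
  exacts [hL.2 p hp, hM.2 p hp]

theorem flatten_replicate (hLL : IsReducedList φ (L ++ L)) (hL : L ≠ []) :
    ∀ n, IsReducedList φ (List.replicate n L).flatten
  | 0 => isReducedList_nil
  | 1 => by simpa using hLL.append_left
  | n + 2 => by
    rw [List.replicate_succ, List.flatten_cons]
    refine hLL.append_left.append (flatten_replicate hLL hL (n + 1)) fun a ha b hb => ?_
    rw [List.replicate_succ, List.flatten_cons, List.map_append,
      List.head?_append_of_ne_nil _ (by simpa using hL)] at hb
    exact (List.isChain_append.1 (List.map_append ▸ hLL.1)).2.2 a ha b hb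

theorem eq_nil_of_listProd_mem_range (hφ : ∀ i, Injective (φ i)) (hL : IsReducedList φ L)
    (hrange : listProd φ L ∈ (base φ).range) : L = [] := by
  let w : CoprodI.Word G := ⟨L, fun p hp h1 => hL.2 p hp (h1 ▸ one_mem _),
    List.isChain_map Sigma.fst |>.1 hL.1⟩
  exact congrArg CoprodI.Word.toList <|
    Reduced.eq_empty_of_mem_range hφ (w := w) hL.2
      ((ofCoprodI_word_prod (φ := φ) w).symm ▸ hrange)

-- `IsReducedList φ (L ++ L)` says that `L` is cyclically reduced.
theorem not_isOfFinOrder_listProd (hφ : ∀ i, Injective (φ i)) (hLL : IsReducedList φ (L ++ L))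
    (hL : L ≠ []) : ¬IsOfFinOrder (listProd φ L) := by
  rw [isOfFinOrder_iff_pow_eq_one]
  rintro ⟨n, hn, hpow⟩
  have hnil := (hLL.flatten_replicate hL n).eq_nil_of_listProd_mem_range hφ
    (by rw [listProd_flatten_replicate, hpow]; exact one_mem _)
  obtain ⟨m, rfl⟩ := Nat.exists_eq_succ_of_ne_zero hn.ne'
  exact hL (by simpa using hnil)

theorem exists_mul_base_eq (hM : IsReducedList φ M) (h : H) :
    ∃ (h' : H) (M' : List (Σ i, G i)), IsReducedList φ M' ∧ M'.length ≤ M.length ∧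
      listProd φ M * base φ h = base φ h' * listProd φ M' := by
  rcases M.eq_nil_or_concat' with rfl | ⟨M₀, ⟨j, s⟩, rfl⟩
  · exact ⟨h, [], isReducedList_nil, le_rfl, by simp⟩
  refine ⟨1, M₀ ++ [⟨j, s * φ j h⟩], hM.of_map_fst_eq (by simp) ?_, by simp, by
    rw [listProd_concat_mul_base, map_one, one_mul]⟩
  intro p hp
  rcases List.mem_append.1 hp with hp | hp
  · exact hM.2 p (List.mem_append_left _ hp)
  · rw [List.mem_singleton.1 hp]
    exact fun hmem => hM.2 ⟨j, s⟩ (by simp) <|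
      ((φ j).range.mul_mem_cancel_right ⟨h, rfl⟩).1 hmem

end IsReducedList

theorem exists_isReducedList_eq (hφ : ∀ i, Injective (φ i)) (g : PushoutI φ) :
    ∃ (h : H) (L : List (Σ i, G i)), IsReducedList φ L ∧ g = base φ h * listProd φ L := by
  classical
  obtain ⟨d⟩ := NormalWord.transversal_nonempty φ hφ
  set w : NormalWord d := g • NormalWord.empty
  refine ⟨w.head, w.toList, ⟨List.isChain_map _ |>.2 w.chain_ne, fun ⟨i, x⟩ hx hrange => ?_⟩, ?_⟩
  · -- a letter lies in the transversal, which meets the range of `φ i` only in `1`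
    have h₁ := (d.compl i).equiv_snd_eq_self_of_mem_of_one_mem (one_mem _) (w.normalized i x hx)
    have h₂ := (d.compl i).equiv_snd_eq_one_of_mem_of_one_mem (d.one_mem i) hrange
    exact w.ne_one _ hx (congrArg Subtype.val (h₁.symm.trans h₂))
  · calc g = w.prod := by simp [w, NormalWord.prod_smul, NormalWord.prod_empty]
      _ = _ := by rw [NormalWord.prod, ofCoprodI_word_prod]

theorem not_isOfFinOrder_of_fst_ne (hφ : ∀ i, Injective (φ i)) {i j : ι} {x : G i} {z : G j}
    {M : List (Σ i, G i)} (hL : IsReducedList φ (⟨i, x⟩ :: (M ++ [⟨j, z⟩]))) (hij : i ≠ j)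
    (h : H) : ¬IsOfFinOrder (base φ h * listProd φ (⟨i, x⟩ :: (M ++ [⟨j, z⟩]))) := by
  rw [base_mul_listProd_cons]
  have hL' : IsReducedList φ (⟨i, φ i h * x⟩ :: (M ++ [⟨j, z⟩])) := by
    refine hL.of_map_fst_eq (by simp) fun p hp => ?_
    rcases List.mem_cons.1 hp with rfl | hp
    · exact fun hmem => hL.2 ⟨i, x⟩ (by simp) <|
        ((φ i).range.mul_mem_cancel_left ⟨h, rfl⟩).1 hmem
    · exact hL.2 p (List.mem_cons_of_mem _ hp)
  refine IsReducedList.not_isOfFinOrder_listProd hφ (hL'.append hL' ?_) (List.cons_ne_nil _ _)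
  simpa [List.getLast?_cons] using Ne.symm hij

theorem exists_conj_eq_shorter_of_fst_eq {i : ι} {x z : G i} {M : List (Σ i, G i)}
    (hL : IsReducedList φ (⟨i, x⟩ :: (M ++ [⟨i, z⟩]))) (h : H) :
    ∃ (c : PushoutI φ) (h' : H) (L : List (Σ i, G i)), IsReducedList φ L ∧
      L.length ≤ M.length + 1 ∧
      c⁻¹ * (base φ h * listProd φ (⟨i, x⟩ :: (M ++ [⟨i, z⟩]))) * c = base φ h' * listProd φ L := by
  have hM : IsReducedList φ (M ++ [⟨i, z⟩]) := hL.tail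
  have hconj : (base φ h * of i x)⁻¹ * (base φ h * listProd φ (⟨i, x⟩ :: (M ++ [⟨i, z⟩]))) *
      (base φ h * of i x) = listProd φ M * of i (z * φ i h * x) := by
    simp only [listProd_cons, listProd_append, listProd_nil, mul_one, map_mul,
      ← of_apply_eq_base φ i h]
    group
  by_cases hy : z * φ i h * x ∈ (φ i).range
  · obtain ⟨k, hk⟩ := hy
    obtain ⟨h', M', hM', hlen, heq⟩ := hM.append_left.exists_mul_base_eq k
    exact ⟨_, h', M', hM', by omega, by rw [hconj, ← hk, of_apply_eq_base, heq]⟩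
  · refine ⟨_, 1, M ++ [⟨i, z * φ i h * x⟩], hM.of_map_fst_eq (by simp) fun p hp => ?_,
      by simp, by rw [hconj, map_one, one_mul, listProd_append]; simp⟩
    rcases List.mem_append.1 hp with hp | hp
    · exact hM.2 p (List.mem_append_left _ hp)
    · rwa [List.mem_singleton.1 hp]

theorem exists_conj_of_isOfFinOrder_base_mul_listProd [Nonempty ι] (hφ : ∀ i, Injective (φ i)) :
    ∀ (L : List (Σ i, G i)) (h : H), IsReducedList φ L →
      IsOfFinOrder (base φ h * listProd φ L) →
      ∃ (c : PushoutI φ) (i : ι) (x : G i), base φ h * listProd φ L = c * of i x * c⁻¹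
  | [], h, _, _ =>
    ⟨1, Classical.arbitrary ι, φ _ h, by simp [of_apply_eq_base]⟩
  | [⟨i, x⟩], h, _, _ =>
    ⟨1, i, φ i h * x, by simp [← of_apply_eq_base φ i h]⟩
  | ⟨i, x⟩ :: q :: L, h, hL, hfin => by
    obtain ⟨M, ⟨j, z⟩, hM⟩ := (q :: L).eq_nil_or_concat'.resolve_left (List.cons_ne_nil _ _)
    have hlen : M.length = L.length := by simpa using congrArg List.length hM.symm
    rw [hM] at hL hfin ⊢
    obtain rfl | hij := eq_or_ne i j
    · obtain ⟨c, h', L', hL', hlen', hc⟩ := exists_conj_eq_shorter_of_fst_eq hL h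
      have hfin' : IsOfFinOrder (base φ h' * listProd φ L') :=
        hc ▸ (isConj_iff.2 ⟨c⁻¹, by rw [inv_inv]⟩).isOfFinOrder hfin
      have : L'.length < L.length + 2 := by omega
      obtain ⟨c', k, y, hc'⟩ :=
        exists_conj_of_isOfFinOrder_base_mul_listProd hφ L' h' hL' hfin'
      refine ⟨c * c', k, y, ?_⟩
      calc _ = c * (c⁻¹ * (base φ h * listProd φ (⟨i, x⟩ :: (M ++ [⟨i, z⟩]))) * c) * c⁻¹ := by
            group
        _ = (c * c') * of k y * (c * c')⁻¹ := by rw [hc, hc']; group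
    · exact absurd hfin (not_isOfFinOrder_of_fst_ne hφ hL hij h)
termination_by L => L.length

theorem exists_conj_of_isOfFinOrder [Nonempty ι] (hφ : ∀ i, Injective (φ i)) {g : PushoutI φ}
    (hg : IsOfFinOrder g) : ∃ (c : PushoutI φ) (i : ι) (x : G i), g = c * of i x * c⁻¹ := by
  obtain ⟨h, L, hL, rfl⟩ := exists_isReducedList_eq hφ g
  exact exists_conj_of_isOfFinOrder_base_mul_listProd hφ L h hL hg

theorem isTorsionFree_ker_iff [Nonempty ι] (hφ : ∀ i, Injective (φ i))
    (hG : ∀ i, IsMulTorsion (G i)) {K : Type*} [Group K] (ψ : PushoutI φ →* K) :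
    Monoid.IsTorsionFree ψ.ker ↔ ∀ i, Injective (ψ.comp (of i)) := by
  refine ⟨fun hψ i => (injective_iff_map_eq_one _).2 fun x hx => ?_, fun hψ => ?_⟩
  · by_contra hx1
    refine hψ ⟨of i x, hx⟩ (fun h1 => hx1 ?_)
      (Submonoid.isOfFinOrder_coe.1 ((of i).isOfFinOrder (hG i x)))
    exact of_injective hφ i (by simpa using congrArg Subtype.val h1)
  · rintro ⟨g, hg⟩ hg1 hfin
    obtain ⟨c, i, x, rfl⟩ := exists_conj_of_isOfFinOrder hφ (Submonoid.isOfFinOrder_coe.2 hfin)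
    have hx : x = 1 := (injective_iff_map_eq_one _).1 (hψ i) x <| by
      simpa [MonoidHom.mem_ker, conj_eq_one_iff] using hg
    exact hg1 (Subtype.ext (by simp [hx]))

end Monoid.PushoutI

theorem stmt_0 (G₁ G₂ : Type u) (G₃ H : Type*) [Group G₁] [Group G₂] [Group G₃] [Group H]
    [Finite G₁] [Finite G₂]
    (f₁ : G₃ →* G₁) (f₂ : G₃ →* G₂)
    (hf₁ : Function.Injective f₁) (hf₂ : Function.Injective f₂)
    (ψ : Monoid.PushoutI (amalgamHom f₁ f₂) →* H) :
    Monoid.IsTorsionFree ↥ψ.ker ↔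
      (Function.Injective (ψ.comp (Monoid.PushoutI.of (φ := amalgamHom f₁ f₂) false)) ∧
       Function.Injective (ψ.comp (Monoid.PushoutI.of (φ := amalgamHom f₁ f₂) true))) := by
  have hφ : ∀ b, Injective (amalgamHom f₁ f₂ b) := by
    rintro (_ | _)
    exacts [hf₁, hf₂]
  have hG : ∀ b, IsMulTorsion (AmalgamFam G₁ G₂ b) := by
    rintro (_ | _)
    exacts [isMulTorsion_of_finite (G := G₁), isMulTorsion_of_finite (G := G₂)]
  rw [Monoid.PushoutI.isTorsionFree_ker_iff hφ hG, Bool.forall_bool]
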